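/- arXiv:2010.04985 — 3 statements merged into one kernel-verified Lean document; each statement's English description precedes it below -/
import Mathlib

section
/- Let q ≥ 1, j ∈ {1,…,q}, and n ≥ 2^q (so that n^{1/q} ≥ 2). Let 𝒟 be a multiset of subsets of [n] that is an h-daisy with kernel K and petals of size j, where h(k) = n^{max(1,k−1)/q}. Then for every S ∈ 𝒟, the number of members of 𝒟 (counted with multiplicity) other than S whose petal has non-empty intersection with the petal S \ K is at most 2·n^{max(1,j−1)/q} − 1. -/
open scoped Classical

/-- `D` is an `h`-daisy with kernel `K` and petals of size `j`: every `S ∈ D` has petal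
`S \ K` of size exactly `j`, and for every `1 ≤ k ≤ j` there is a subset `P ⊆ S \ K` of
size at least `k` each of whose elements lies in at most `h k` members of `D`
(counted with multiplicity). -/
def IsDaisy (n : ℕ) (h : ℕ → ℝ) (D : Multiset (Finset (Fin n))) (K : Finset (Fin n))
    (j : ℕ) : Prop :=
  ∀ S ∈ D, (S \ K).card = j ∧
    ∀ k, 1 ≤ k → k ≤ j →
      ∃ P ⊆ S \ K, k ≤ P.card ∧
        ∀ i ∈ P, ((Multiset.countP (fun T => i ∈ T) D : ℕ) : ℝ) ≤ h k

lemma aux_countP_le_sum {n : ℕ} (A : Finset (Fin n)) (p : Finset (Fin n) → Prop)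
    [DecidablePred p] (hp : ∀ T, p T → ∃ i ∈ A, i ∈ T) (M : Multiset (Finset (Fin n))) :
    M.countP p ≤ ∑ i ∈ A, M.countP (fun T => i ∈ T) := by
  induction M using Multiset.induction with
  | empty => simp
  | cons T M ih =>
    simp only [Multiset.countP_cons]
    rw [Finset.sum_add_distrib]
    by_cases hT : p T
    · obtain ⟨i0, hi0A, hi0T⟩ := hp T hT
      have h1 : (1 : ℕ) ≤ ∑ i ∈ A, (if i ∈ T then (1 : ℕ) else 0) := by
        refine le_trans ?_ (Finset.single_le_sum
          (f := fun i => if i ∈ T then (1 : ℕ) else 0) (fun i _ => by positivity) hi0A)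
        simp [hi0T]
      simp only [hT, if_true]
      omega
    · simp only [hT, if_false]
      omega

lemma aux_sum_deg_le {n : ℕ} : ∀ (j : ℕ) (h : ℕ → ℝ) (A : Finset (Fin n)) (d : Fin n → ℝ),
    A.card = j →
    (∀ k, 1 ≤ k → k ≤ j → ∃ P ⊆ A, k ≤ P.card ∧ ∀ i ∈ P, d i ≤ h k) →
    ∑ i ∈ A, d i ≤ ∑ k ∈ Finset.range j, h (k + 1) := by
  intro j
  induction j with
  | zero => intro h A d hA _; rw [Finset.card_eq_zero.1 hA]; simp
  | succ j ih =>
    intro h A d hA hyp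
    obtain ⟨P, hPA, hP1, hPd⟩ := hyp 1 le_rfl (by omega)
    obtain ⟨i0, hi0⟩ := Finset.card_pos.1 (by omega : 0 < P.card)
    have hi0A : i0 ∈ A := hPA hi0
    have key : ∑ i ∈ A.erase i0, d i ≤ ∑ k ∈ Finset.range j, h (k + 2) := by
      apply ih (fun k => h (k + 1))
      · rw [Finset.card_erase_of_mem hi0A, hA]
        omega
      · intro k hk1 hkj
        obtain ⟨P', hP'A, hP'c, hP'd⟩ := hyp (k + 1) (by omega) (by omega)
        refine ⟨P'.erase i0, ?_, ?_, ?_⟩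
        · intro x hx
          rcases Finset.mem_erase.1 hx with ⟨hx1, hx2⟩
          exact Finset.mem_erase.2 ⟨hx1, hP'A hx2⟩
        · have := Finset.pred_card_le_card_erase (s := P') (a := i0)
          omega
        · intro i hi; exact hP'd i (Finset.mem_erase.1 hi).2
    rw [← Finset.add_sum_erase A d hi0A, Finset.sum_range_succ']
    have hd0 : d i0 ≤ h 1 := hPd i0 hi0
    have he : ∑ k ∈ Finset.range j, h (k + 1 + 1) = ∑ k ∈ Finset.range j, h (k + 2) := by
      apply Finset.sum_congr rfl
      intro k _
      norm_num
    rw [he]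
    linarith [add_le_add hd0 key]

lemma aux_geom_bound (r : ℝ) (hr : 2 ≤ r) : ∀ j : ℕ, 1 ≤ j →
    ∑ k ∈ Finset.range j, r ^ (max 1 k) ≤ 2 * r ^ (max 1 (j - 1)) + ((j : ℝ) - 1) := by
  intro j hj
  induction j, hj using Nat.le_induction with
  | base =>
    rw [Finset.sum_range_one]
    norm_num
    nlinarith
  | succ j hj ih =>
    rw [Finset.sum_range_succ]
    have hmaxj : max 1 j = j := Nat.max_eq_right hj
    have hmaxj' : max 1 (j + 1 - 1) = j := by simpa using hmaxj
    rw [hmaxj, hmaxj']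
    rcases Nat.lt_or_ge j 2 with h2 | h2
    · -- j = 1
      interval_cases j
      simp only [Finset.sum_range_one]
      norm_num
      nlinarith
    · have hmj : max 1 (j - 1) = j - 1 := Nat.max_eq_right (by omega)
      rw [hmj] at ih
      have hpow : 2 * r ^ (j - 1) ≤ r ^ j := by
        have hrj : r ^ j = r * r ^ (j - 1) := by
          rw [← pow_succ']
          congr 1
          omega
        have h0 : (0 : ℝ) ≤ r ^ (j - 1) := by positivity
        nlinarith
      push_cast
      nlinarith

/-- For an `h`-daisy `𝒟` (with `h k = n^{max(1,k-1)/q}`) with kernel `K` and petals of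
size `j ∈ [1,q]`, every `S ∈ 𝒟` has at most `2·n^{max(1,j-1)/q} - 1` members of `𝒟`
other than `S` (counted with multiplicity) whose petal intersects the petal `S \ K`. -/
theorem daisy_intersection_bound (q n j : ℕ) (hq : 1 ≤ q) (hj1 : 1 ≤ j) (hjq : j ≤ q)
    (hn : 2 ^ q ≤ n)
    (𝒟 : Multiset (Finset (Fin n))) (K : Finset (Fin n))
    (hd : IsDaisy n (fun k => (n : ℝ) ^ (((max 1 (k - 1) : ℕ) : ℝ) / (q : ℝ))) 𝒟 K j) :
    ∀ S ∈ 𝒟,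
      ((Multiset.countP (fun T => ((T \ K) ∩ (S \ K)).Nonempty) (𝒟.erase S) : ℕ) : ℝ)
        ≤ 2 * (n : ℝ) ^ (((max 1 (j - 1) : ℕ) : ℝ) / (q : ℝ)) - 1 := by
  intro S hS
  have hq0 : (q : ℝ) ≠ 0 := by positivity
  have hn0 : (0 : ℝ) ≤ (n : ℝ) := Nat.cast_nonneg n
  set r : ℝ := (n : ℝ) ^ ((1 : ℝ) / (q : ℝ)) with hr_def
  have h2n : (2 : ℝ) ^ (q : ℕ) ≤ (n : ℝ) := by exact_mod_cast hn
  have hr2 : 2 ≤ r := by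
    calc (2 : ℝ) = ((2 : ℝ) ^ (q : ℕ)) ^ ((1 : ℝ) / (q : ℝ)) := by
          rw [← Real.rpow_natCast 2 q, ← Real.rpow_mul (by norm_num)]
          rw [mul_one_div, div_self hq0, Real.rpow_one]
      _ ≤ r := Real.rpow_le_rpow (by positivity) h2n (by positivity)
  have hpow : ∀ m : ℕ, (n : ℝ) ^ (((m : ℕ) : ℝ) / (q : ℝ)) = r ^ m := by
    intro m
    rw [hr_def, ← Real.rpow_natCast ((n : ℝ) ^ ((1 : ℝ) / (q : ℝ))) m,
      ← Real.rpow_mul hn0]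
    congr 1
    field_simp
  obtain ⟨hcard, hk⟩ := hd S hS
  set A : Finset (Fin n) := S \ K with hA_def
  set d : Fin n → ℝ := fun i => ((Multiset.countP (fun T => i ∈ T) 𝒟 : ℕ) : ℝ) with hd_def
  -- sum of degrees bound
  have hsum : ∑ i ∈ A, d i ≤ ∑ k ∈ Finset.range j, r ^ (max 1 k) := by
    have hmain := aux_sum_deg_le j (fun k => r ^ (max 1 (k - 1))) A d hcard ?_
    · refine hmain.trans (le_of_eq ?_)
      apply Finset.sum_congr rfl
      intro k _
      simp
    · intro k hk1 hkj
      obtain ⟨P, hPA, hPc, hPd⟩ := hk k hk1 hkj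
      refine ⟨P, hPA, hPc, fun i hi => ?_⟩
      have hthis := hPd i hi
      simpa only [← hpow] using hthis
  -- counting bound
  have hp : ∀ T : Finset (Fin n), ((T \ K) ∩ (S \ K)).Nonempty → ∃ i ∈ A, i ∈ T := by
    intro T hT
    obtain ⟨i, hi⟩ := hT
    rw [Finset.mem_inter] at hi
    exact ⟨i, hi.2, (Finset.mem_sdiff.1 hi.1).1⟩
  have h1 := aux_countP_le_sum A (fun T => ((T \ K) ∩ (S \ K)).Nonempty) hp (𝒟.erase S)
  have h2 : ∑ i ∈ A, Multiset.countP (fun T => i ∈ T) 𝒟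
      = (∑ i ∈ A, Multiset.countP (fun T => i ∈ T) (𝒟.erase S)) + A.card := by
    have hstep : ∀ i ∈ A, Multiset.countP (fun T => i ∈ T) 𝒟
        = Multiset.countP (fun T => i ∈ T) (𝒟.erase S) + 1 := by
      intro i hiA
      have hiS : i ∈ S := (Finset.mem_sdiff.1 hiA).1
      conv_lhs => rw [← Multiset.cons_erase hS]
      rw [Multiset.countP_cons]
      simp [hiS]
    rw [Finset.sum_congr rfl hstep, Finset.sum_add_distrib, Finset.sum_const,
      smul_eq_mul, mul_one]
  have hcount : Multiset.countP (fun T => ((T \ K) ∩ (S \ K)).Nonempty) (𝒟.erase S) + j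
      ≤ ∑ i ∈ A, Multiset.countP (fun T => i ∈ T) 𝒟 := by
    rw [h2, hcard]
    exact Nat.add_le_add_right h1 j
  have hcountR : ((Multiset.countP (fun T => ((T \ K) ∩ (S \ K)).Nonempty) (𝒟.erase S) : ℕ) : ℝ) + (j : ℝ) ≤ ∑ i ∈ A, d i := by
    have h3 : ((Multiset.countP (fun T => ((T \ K) ∩ (S \ K)).Nonempty) (𝒟.erase S) + j : ℕ) : ℝ)
        ≤ ((∑ i ∈ A, Multiset.countP (fun T => i ∈ T) 𝒟 : ℕ) : ℝ) := Nat.cast_le.2 hcount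
    push_cast at h3
    exact h3
  have hgeom := aux_geom_bound r hr2 j hj1
  have hj1R : (1 : ℝ) ≤ (j : ℝ) := by exact_mod_cast hj1
  have hfin : ((Multiset.countP (fun T => ((T \ K) ∩ (S \ K)).Nonempty) (𝒟.erase S) : ℕ) : ℝ)
      ≤ 2 * r ^ (max 1 (j - 1)) - 1 := by linarith
  rw [hpow (max 1 (j - 1))]
  exact hfin
end

section
/- Let N, M ≥ 1 be integers, let σ ∈ (0,1), and let E be an N × M matrix with entries in {0,1} such that every column of E contains at most σ·N ones. Then for every integer t with t > 3·(ln M)/σ, there exist (not necessarily distinct) row indices i_1, …, i_t ∈ [N] such that for every column j ∈ [M], the number of k ∈ [t] with E_{i_k, j} = 1 is at most 2σt. -/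
open scoped Classical

/-- **Probabilistic-method core of randomness reduction.** If every column of the
`N × M` Boolean matrix `E` has at most `σ·N` ones, then for every integer
`t > 3·ln(M)/σ` there are (not necessarily distinct) rows `i₁, …, i_t` such that every
column has at most `2σt` ones among these rows. -/
theorem row_sampling (N M : ℕ) (hN : 1 ≤ N) (hM : 1 ≤ M)
    (σ : ℝ) (hσ0 : 0 < σ) (hσ1 : σ < 1)
    (E : Fin N → Fin M → Bool)
    (hcol : ∀ j : Fin M,
      ((Finset.univ.filter fun i : Fin N => E i j = true).card : ℝ) ≤ σ * N) :
    ∀ t : ℕ, 3 * Real.log M / σ < (t : ℝ) →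
      ∃ f : Fin t → Fin N, ∀ j : Fin M,
        ((Finset.univ.filter fun k : Fin t => E (f k) j = true).card : ℝ) ≤ 2 * σ * t := by
  intro t ht
  have hM0 : (1:ℝ) ≤ (M:ℝ) := by exact_mod_cast hM
  have hlogM : 0 ≤ Real.log M := Real.log_nonneg hM0
  have ht0 : (0:ℝ) < t := lt_of_le_of_lt (by positivity) ht
  have hlog : Real.log M < σ * t / 3 := by
    rw [div_lt_iff₀ hσ0] at ht
    linarith
  -- the count of ones in column j among rows of f
  set X : Fin M → (Fin t → Fin N) → ℕ :=
    fun j f => (Finset.univ.filter fun k : Fin t => E (f k) j = true).card with hXdef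
  -- bad tuples for column j
  set B : Fin M → Finset (Fin t → Fin N) :=
    fun j => Finset.univ.filter fun f => 2 * σ * t < (X j f : ℝ) with hBdef
  -- key moment bound: ∑_f 2^{X j f} = (N + m_j)^t
  have key : ∀ j : Fin M, ∑ f : Fin t → Fin N, (2:ℝ) ^ (X j f) ≤
      ((N:ℝ) * Real.exp σ) ^ t := by
    intro j
    have h1 : ∀ f : Fin t → Fin N, (2:ℝ) ^ (X j f) =
        ∏ k : Fin t, (if E (f k) j = true then (2:ℝ) else 1) := by
      intro f
      rw [Finset.prod_ite, Finset.prod_const, Finset.prod_const, one_pow, mul_one]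
    have h2 : ∑ f : Fin t → Fin N, (2:ℝ) ^ (X j f) =
        ∏ _k : Fin t, ∑ i : Fin N, (if E i j = true then (2:ℝ) else 1) := by
      simp only [h1]
      exact (Fintype.prod_sum fun _ i => if E i j = true then (2:ℝ) else 1).symm
    rw [h2, Finset.prod_const, Finset.card_univ, Fintype.card_fin]
    apply pow_le_pow_left₀ (by positivity)
    have h3 : ∑ i : Fin N, (if E i j = true then (2:ℝ) else 1) =
        (N:ℝ) + ((Finset.univ.filter fun i : Fin N => E i j = true).card : ℝ) := by
      have hle : (Finset.univ.filter fun i : Fin N => E i j = true).card ≤ N := by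
        simpa using Finset.card_filter_le Finset.univ (fun i : Fin N => E i j = true)
      rw [Finset.sum_ite, Finset.sum_const, Finset.sum_const]
      simp only [smul_eq_mul, mul_one, nsmul_eq_mul]
      have hsplit : (Finset.univ.filter fun i : Fin N => E i j = true).card +
          (Finset.univ.filter fun i : Fin N => ¬ E i j = true).card = N := by
        rw [Finset.card_filter_add_card_filter_not, Finset.card_univ,
          Fintype.card_fin]
      have hsplit' := congrArg (fun n : ℕ => (n:ℝ)) hsplit
      push_cast at hsplit'
      linarith
    rw [h3]
    have := hcol j
    have hexp : 1 + σ ≤ Real.exp σ := by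
      have := Real.add_one_le_exp σ; linarith
    have hN0 : (0:ℝ) < N := by exact_mod_cast hN
    calc (N:ℝ) + _ ≤ (N:ℝ) + σ * N := by linarith
      _ = (N:ℝ) * (1 + σ) := by ring
      _ ≤ (N:ℝ) * Real.exp σ := by nlinarith
  -- bound for each bad set
  have hBcard : ∀ j : Fin M, ((B j).card : ℝ) * (2:ℝ) ^ (2 * σ * t) ≤
      ((N:ℝ) * Real.exp σ) ^ t := by
    intro j
    have h1 : ((B j).card : ℝ) * (2:ℝ) ^ (2 * σ * t) ≤
        ∑ f ∈ B j, (2:ℝ) ^ (X j f) := by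
      have hterm : ∀ f ∈ B j, (2:ℝ) ^ (2 * σ * t) ≤ (2:ℝ) ^ (X j f) := by
        intro f hf
        rw [hBdef, Finset.mem_filter] at hf
        calc (2:ℝ) ^ (2 * σ * t) ≤ (2:ℝ) ^ ((X j f : ℝ)) :=
              Real.rpow_le_rpow_of_exponent_le one_le_two hf.2.le
          _ = (2:ℝ) ^ (X j f) := Real.rpow_natCast 2 _
      calc ((B j).card : ℝ) * (2:ℝ) ^ (2 * σ * t)
          = ∑ _f ∈ B j, (2:ℝ) ^ (2 * σ * t) := by
            rw [Finset.sum_const, nsmul_eq_mul]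
        _ ≤ ∑ f ∈ B j, (2:ℝ) ^ (X j f) := Finset.sum_le_sum hterm
    calc ((B j).card : ℝ) * (2:ℝ) ^ (2 * σ * t) ≤ ∑ f ∈ B j, (2:ℝ) ^ (X j f) := h1
      _ ≤ ∑ f : Fin t → Fin N, (2:ℝ) ^ (X j f) :=
          Finset.sum_le_sum_of_subset_of_nonneg (Finset.subset_univ _)
            (fun i _ _ => by positivity)
      _ ≤ ((N:ℝ) * Real.exp σ) ^ t := key j
  -- the union of bad sets is smaller than all tuples
  have hunion : ((Finset.univ.biUnion B).card : ℝ) < (N:ℝ) ^ t := by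
    have h2pos : (0:ℝ) < (2:ℝ) ^ (2 * σ * t) := Real.rpow_pos_of_pos two_pos _
    have hsum : ((Finset.univ.biUnion B).card : ℝ) ≤
        (M:ℝ) * (((N:ℝ) * Real.exp σ) ^ t / (2:ℝ) ^ (2 * σ * t)) := by
      calc ((Finset.univ.biUnion B).card : ℝ) ≤ ∑ j : Fin M, ((B j).card : ℝ) := by
            exact_mod_cast Finset.card_biUnion_le
        _ ≤ ∑ _j : Fin M, ((N:ℝ) * Real.exp σ) ^ t / (2:ℝ) ^ (2 * σ * t) := by
            apply Finset.sum_le_sum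
            intro j _
            rw [le_div_iff₀ h2pos]
            exact hBcard j
        _ = (M:ℝ) * (((N:ℝ) * Real.exp σ) ^ t / (2:ℝ) ^ (2 * σ * t)) := by
            rw [Finset.sum_const, Finset.card_univ, Fintype.card_fin, nsmul_eq_mul]
    apply lt_of_le_of_lt hsum
    have hN0 : (0:ℝ) < N := by exact_mod_cast hN
    rw [mul_div_assoc' , div_lt_iff₀ h2pos, mul_pow]
    have hMlt : (M:ℝ) * Real.exp σ ^ t < (2:ℝ) ^ (2 * σ * t) := by
      have hM' : (M:ℝ) = Real.exp (Real.log M) := (Real.exp_log (by linarith)).symm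
      have he : Real.exp σ ^ t = Real.exp (σ * t) := by
        rw [← Real.exp_nat_mul]; ring_nf
      have h2 : (2:ℝ) ^ (2 * σ * t) = Real.exp (2 * σ * t * Real.log 2) := by
        rw [Real.rpow_def_of_pos two_pos]; ring_nf
      rw [hM', he, h2, ← Real.exp_add, Real.exp_lt_exp]
      have hlog2 : (0.6931471803:ℝ) < Real.log 2 := Real.log_two_gt_d9
      nlinarith [mul_pos hσ0 ht0]
    calc (M:ℝ) * ((N:ℝ)^t * Real.exp σ ^ t) = ((M:ℝ) * Real.exp σ ^ t) * (N:ℝ)^t := by ring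
      _ < (2:ℝ) ^ (2 * σ * t) * (N:ℝ)^t := by
          apply mul_lt_mul_of_pos_right hMlt (by positivity)
      _ = (N:ℝ)^t * (2:ℝ) ^ (2 * σ * t) := by ring
  -- extract a good tuple
  have hne : Finset.univ.biUnion B ≠ (Finset.univ : Finset (Fin t → Fin N)) := by
    intro heq
    rw [heq] at hunion
    rw [Finset.card_univ, Fintype.card_fun, Fintype.card_fin, Fintype.card_fin] at hunion
    push_cast at hunion
    exact lt_irrefl _ hunion
  obtain ⟨f, hf⟩ : ∃ f : Fin t → Fin N, f ∉ Finset.univ.biUnion B := by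
    by_contra h
    push_neg at h
    exact hne (Finset.eq_univ_iff_forall.mpr fun f => h f)
  refine ⟨f, fun j => ?_⟩
  by_contra hj
  push_neg at hj
  apply hf
  exact Finset.mem_biUnion.mpr ⟨j, Finset.mem_univ j, by
    rw [hBdef]; simp only [Finset.mem_filter, Finset.mem_univ, true_and]; exact hj⟩
end

section
/- Let M be a q-local randomized algorithm over Σ^n computing a partial function f : Σ^n ⇀ {0,1} with error rate σ. Fix x ∈ Σ^n in the domain of f, and suppose there exists y ∈ Σ^n in the domain of f with f(y) ≠ f(x) such that M is ρ-robust at y. Then every sub-multiset 𝒮 of the support of μ_x (the multi-collection of query sets induced by x, one per random string) whose union ⋃_{S ∈ 𝒮} S has size strictly less than ρ·n satisfies μ_x(𝒮) ≤ 2σ. -/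
open scoped Classical

/-- Decision trees over strings in `Fin n → A` with outputs in `O`: internal nodes are
labeled by coordinates, with one child per symbol, and leaves are labeled by outputs. -/
inductive DTree (A : Type) (n : ℕ) (O : Type) : Type
  | leaf : O → DTree A n O
  | node : Fin n → (A → DTree A n O) → DTree A n O

namespace DTree

/-- Evaluate a decision tree on input `x`, following the path determined by `x`. -/
def eval {A O : Type} {n : ℕ} : DTree A n O → (Fin n → A) → O
  | leaf b, _ => b
  | node i ts, x => (ts (x i)).eval x

/-- The set of coordinates queried by a decision tree on input `x`. -/
def queries {A O : Type} {n : ℕ} : DTree A n O → (Fin n → A) → Finset (Fin n)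
  | leaf _, _ => ∅
  | node i ts, x => insert i ((ts (x i)).queries x)

/-- The depth (maximum number of queries along a branch) of a decision tree. -/
def depth {A O : Type} [Fintype A] {n : ℕ} : DTree A n O → ℕ
  | leaf _ => 0
  | node _ ts => 1 + Finset.univ.sup fun a => (ts a).depth

end DTree

/-- A randomized local algorithm is modeled as a finite multiset `M` of decision trees,
one per outcome of the coin flips (uniformly distributed).  `prP M x P` is the
probability, over a uniformly random tree of `M`, that the output on input `x`
satisfies `P`. -/
noncomputable def prP {A O : Type} {n : ℕ} (M : Multiset (DTree A n O)) (x : Fin n → A)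
    (P : O → Prop) : ℝ :=
  ((Multiset.countP (fun t => P (t.eval x)) M : ℕ) : ℝ) / ((Multiset.card M : ℕ) : ℝ)

/-- Relative Hamming distance on `Fin n → A`. -/
noncomputable def relDist {A : Type} [DecidableEq A] {n : ℕ} (x y : Fin n → A) : ℝ :=
  ((Finset.univ.filter fun i => x i ≠ y i).card : ℝ) / (n : ℝ)

/-- Evaluation only depends on queried coordinates. -/
theorem DTree.eval_eq_of_agree {A O : Type} {n : ℕ} (t : DTree A n O) (x w : Fin n → A)
    (h : ∀ i ∈ t.queries x, w i = x i) : t.eval w = t.eval x := by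
  induction t with
  | leaf b => rfl
  | node i ts ih =>
    have hi : w i = x i := h i (by simp [DTree.queries])
    have : ∀ j ∈ (ts (x i)).queries x, w j = x j := fun j hj =>
      h j (by simp [DTree.queries, hj])
    simp only [DTree.eval, hi, ih (x i) this]

theorem countP_mono_pred {α : Type*} {p q : α → Prop} [DecidablePred p] [DecidablePred q]
    (h : ∀ a, p a → q a) (s : Multiset α) : s.countP p ≤ s.countP q := by
  induction s using Multiset.induction with
  | empty => simp
  | cons a s ih =>
    rw [Multiset.countP_cons, Multiset.countP_cons]
    by_cases hp : p a
    · rw [if_pos hp, if_pos (h a hp)]; omega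
    · rw [if_neg hp]; split <;> omega

theorem countP_or_le {α : Type*} {p q : α → Prop} [DecidablePred p] [DecidablePred q]
    (s : Multiset α) :
    s.countP (fun a => p a ∨ q a) ≤ s.countP p + s.countP q := by
  induction s using Multiset.induction with
  | empty => simp
  | cons a s ih =>
    rw [Multiset.countP_cons, Multiset.countP_cons, Multiset.countP_cons]
    by_cases hp : p a <;> by_cases hq : q a <;> simp [hp, hq] <;> omega

/-- Error count bound: if the success probability is at least `1 - σ`, the number of
erring trees is at most `σ * |M|`. -/
theorem err_count_le {A : Type} {n : ℕ} (M : Multiset (DTree A n Bool)) (hM : M ≠ 0)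
    (z : Fin n → A) (b : Bool) (σ : ℝ) (h : 1 - σ ≤ prP M z (· = b)) :
    ((M.countP (fun t => ¬ (t.eval z = b)) : ℕ) : ℝ) ≤ σ * ((Multiset.card M : ℕ) : ℝ) := by
  have hm : (0 : ℝ) < ((Multiset.card M : ℕ) : ℝ) := by
    have : 0 < Multiset.card M := Multiset.card_pos.mpr hM
    exact_mod_cast this
  have hsum : M.countP (fun t => t.eval z = b) + M.countP (fun t => ¬ (t.eval z = b))
      = Multiset.card M := (Multiset.card_eq_countP_add_countP _ M).symm
  have h' : (1 - σ) * ((Multiset.card M : ℕ) : ℝ)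
      ≤ ((M.countP (fun t => t.eval z = b) : ℕ) : ℝ) := by
    have := h
    unfold prP at this
    calc (1 - σ) * ((Multiset.card M : ℕ) : ℝ)
        ≤ (((M.countP (fun t => t.eval z = b) : ℕ) : ℝ) / ((Multiset.card M : ℕ) : ℝ))
            * ((Multiset.card M : ℕ) : ℝ) := by
          apply mul_le_mul_of_nonneg_right _ hm.le
          refine this.trans (le_of_eq ?_)
          congr 1
          congr!
      _ = ((M.countP (fun t => t.eval z = b) : ℕ) : ℝ) := by field_simp
  have hcast : ((M.countP (fun t => t.eval z = b) : ℕ) : ℝ)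
      + ((M.countP (fun t => ¬ (t.eval z = b)) : ℕ) : ℝ) = ((Multiset.card M : ℕ) : ℝ) := by
    exact_mod_cast congrArg (Nat.cast (R := ℝ)) hsum
  nlinarith

/-- **The volume lemma.** Let `M` be a `q`-local randomized algorithm computing the
partial function `f` (with domain `dom`) with error rate `σ`.  Fix `x ∈ dom`, and
suppose some `y ∈ dom` with `f y ≠ f x` is `ρ`-robust for `M`.  Then every sub-multiset
`𝒮` of the support of `μ_x` (the multiset of query sets induced by `x`, one per random
string) whose union covers fewer than `ρ·n` coordinates has weight `μ_x(𝒮) ≤ 2σ`. -/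
theorem volume_lemma {A : Type} [Fintype A] [DecidableEq A] {n q : ℕ}
    (dom : Set ((Fin n) → A)) (f : ((Fin n) → A) → Bool) (σ ρ : ℝ)
    (M : Multiset (DTree A n Bool)) (hM : M ≠ 0)
    (hq : ∀ t ∈ M, DTree.depth t ≤ q)
    (herr : ∀ z ∈ dom, 1 - σ ≤ prP M z (· = f z))
    (x : (Fin n) → A) (hx : x ∈ dom)
    (y : (Fin n) → A) (hy : y ∈ dom) (hfy : f y ≠ f x)
    (hrob : ∀ w : (Fin n) → A, relDist w y ≤ ρ → 1 - σ ≤ prP M w (· = f y)) :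
    ∀ 𝒮 : Multiset (Finset (Fin n)),
      𝒮 ≤ M.map (fun t => t.queries x) →
      ((𝒮.sup.card : ℝ)) < ρ * n →
      ((Multiset.card 𝒮 : ℕ) : ℝ) / ((Multiset.card M : ℕ) : ℝ) ≤ 2 * σ := by
  intro 𝒮 hsub hcard
  set U : Finset (Fin n) := 𝒮.sup with hU
  have hm : (0 : ℝ) < ((Multiset.card M : ℕ) : ℝ) := by
    have : 0 < Multiset.card M := Multiset.card_pos.mpr hM
    exact_mod_cast this
  have hn : (0 : ℝ) < (n : ℝ) := by
    by_contra hn'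
    push_neg at hn'
    have hnz : (n : ℝ) = 0 := le_antisymm hn' (Nat.cast_nonneg n)
    rw [hnz, mul_zero] at hcard
    have : (0 : ℝ) ≤ (U.card : ℝ) := Nat.cast_nonneg _
    linarith
  -- hybrid input
  set w : Fin n → A := fun i => if i ∈ U then x i else y i with hw
  have hwy : relDist w y ≤ ρ := by
    have hsubset : (Finset.univ.filter fun i => w i ≠ y i) ⊆ U := by
      intro i hi
      simp only [Finset.mem_filter] at hi
      by_contra hiU
      exact hi.2 (by simp [hw, hiU])
    have hle : ((Finset.univ.filter fun i => w i ≠ y i).card : ℝ) ≤ (U.card : ℝ) := by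
      exact_mod_cast Finset.card_le_card hsubset
    have : ((Finset.univ.filter fun i => w i ≠ y i).card : ℝ) < ρ * n := lt_of_le_of_lt hle hcard
    rw [relDist, div_le_iff₀ hn]
    linarith [mul_comm ρ (n : ℝ)]
  have ha := err_count_le M hM x (f x) σ (herr x hx)
  have hb := err_count_le M hM w (f y) σ (hrob w hwy)
  -- every tree whose queries on x lie in U errs on x or on w
  have hkey : ∀ t : DTree A n Bool, t.queries x ⊆ U →
      (¬ (t.eval x = f x) ∨ ¬ (t.eval w = f y)) := by
    intro t hqt
    have hagree : ∀ i ∈ t.queries x, w i = x i := by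
      intro i hi
      simp [hw, hqt hi]
    have heq : t.eval w = t.eval x := DTree.eval_eq_of_agree t x w hagree
    by_cases hc : t.eval x = f x
    · right
      rw [heq, hc]
      exact fun h => hfy (h.symm)
    · left; exact hc
  have hcount : Multiset.card 𝒮 ≤
      M.countP (fun t => ¬ (t.eval x = f x) ∨ ¬ (t.eval w = f y)) := by
    have h1 : Multiset.card 𝒮 = 𝒮.countP (fun S => S ⊆ U) := by
      symm
      rw [Multiset.countP_eq_card]
      intro S hS
      exact Multiset.le_sup hS
    have h2 : 𝒮.countP (fun S => S ⊆ U) ≤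
        (M.map (fun t => t.queries x)).countP (fun S => S ⊆ U) :=
      Multiset.countP_le_of_le _ hsub
    have h3 : (M.map (fun t => t.queries x)).countP (fun S => S ⊆ U)
        = M.countP (fun t => t.queries x ⊆ U) := by
      rw [Multiset.countP_map, Multiset.countP_eq_card_filter]
    have h4 : M.countP (fun t => t.queries x ⊆ U) ≤
        M.countP (fun t => ¬ (t.eval x = f x) ∨ ¬ (t.eval w = f y)) :=
      countP_mono_pred hkey M
    omega
  have hsplit : M.countP (fun t => ¬ (t.eval x = f x) ∨ ¬ (t.eval w = f y)) ≤
      M.countP (fun t => ¬ (t.eval x = f x)) + M.countP (fun t => ¬ (t.eval w = f y)) :=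
    countP_or_le M
  have hfinal : ((Multiset.card 𝒮 : ℕ) : ℝ) ≤ 2 * σ * ((Multiset.card M : ℕ) : ℝ) := by
    have h5 : ((Multiset.card 𝒮 : ℕ) : ℝ) ≤
        ((M.countP (fun t => ¬ (t.eval x = f x)) : ℕ) : ℝ)
        + ((M.countP (fun t => ¬ (t.eval w = f y)) : ℕ) : ℝ) := by
      exact_mod_cast le_trans hcount hsplit
    linarith
  rw [div_le_iff₀ hm]
  exact hfinal
end
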